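/- Define the Jacobi differential operator D_{(n,α,β)} a := (1-τ²)a'' + (β - α - (α+β+2)τ)a' + n(n+α+β+1)a. Then for |τ| < 1 and any C² function a, the identity D_{(n,α,β)}(((1-τ)/2)^{-α} a(τ)) = ((1-τ)/2)^{-α} D_{(n+α,-α,β)} a(τ) holds. -/

import Mathlib

/-!
For `w(τ) = ((1-τ)/2)^p` one has `w' = -p w/(1-τ)` and `w'' = p(p-1) w/(1-τ)²`, so by the
Leibniz rule `D(w a) / w` is again a second-order operator applied to `a`. For `p = -α` the
poles at `τ = 1` cancel because `(1-τ²)/(1-τ) = 1+τ`: the coefficient of `a'` becomes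
`β + α - (β - α + 2)τ`, and that of `a` becomes `n(n+α+β+1) + α(β+1) = (n+α)(n+β+1)`.
-/

open Set

/-- The Jacobi differential operator
`D_{(n,α,β)} a = (1-τ²)a'' + (β - α - (α+β+2)τ)a' + n(n+α+β+1)a`. -/
noncomputable def jacobiOp (n α β : ℝ) (a : ℝ → ℂ) (τ : ℝ) : ℂ :=
  (1 - (τ : ℂ) ^ 2) * deriv (deriv a) τ +
    ((β : ℂ) - (α : ℂ) - ((α : ℂ) + (β : ℂ) + 2) * (τ : ℂ)) * deriv a τ +
    (n : ℂ) * ((n : ℂ) + (α : ℂ) + (β : ℂ) + 1) * a τ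

open Filter Topology

theorem deriv_deriv_mul {𝕜 𝔸 : Type*} [NontriviallyNormedField 𝕜] [NormedRing 𝔸]
    [NormedAlgebra 𝕜 𝔸] {f g : 𝕜 → 𝔸} {x : 𝕜} (hf : ContDiffAt 𝕜 2 f x)
    (hg : ContDiffAt 𝕜 2 g x) :
    deriv (deriv (fun y => f y * g y)) x =
      deriv (deriv f) x * g x + 2 * deriv f x * deriv g x + f x * deriv (deriv g) x := by
  have hiter : ∀ F : 𝕜 → 𝔸, iteratedDeriv 2 F = deriv (deriv F) := by
    simp [iteratedDeriv_succ]
  rw [← hiter, iteratedDeriv_fun_mul hf hg]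
  simp only [Finset.sum_range_succ, Finset.range_one, Finset.sum_singleton, Nat.choose_zero_right,
    Nat.choose_succ_self_right, Nat.choose_self, Nat.cast_one, Nat.cast_ofNat, one_mul,
    Nat.reduceAdd, tsub_zero, Nat.add_one_sub_one, tsub_self, iteratedDeriv_zero,
    iteratedDeriv_one, hiter]
  abel

section HalfOneSubRpow

variable (p : ℝ) {t : ℝ}

theorem contDiffAt_ofReal_half_one_sub_rpow (ht : t < 1) :
    ContDiffAt ℝ 2 (fun x : ℝ => ((((1 - x) / 2) ^ p : ℝ) : ℂ)) t :=
  Complex.ofRealCLM.contDiff.contDiffAt.comp t <|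
    (by fun_prop : ContDiffAt ℝ 2 (fun x : ℝ => (1 - x) / 2) t).rpow_const_of_ne
      (by linarith)

theorem hasDerivAt_ofReal_half_one_sub_rpow (ht : t < 1) :
    HasDerivAt (fun x : ℝ => ((((1 - x) / 2) ^ p : ℝ) : ℂ))
      (-p * ((((1 - t) / 2) ^ p : ℝ) : ℂ) / (1 - t)) t := by
  have hu : HasDerivAt (fun x : ℝ => (1 - x) / 2) (-1 / 2) t := by
    simpa using ((hasDerivAt_id t).const_sub 1).div_const 2
  have h := ((Real.hasDerivAt_rpow_const (p := p) (Or.inl (by linarith))).comp t hu).ofReal_comp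
  refine h.congr_deriv ?_
  rw [Real.rpow_sub_one (by linarith)]
  push_cast
  field_simp

theorem deriv_ofReal_half_one_sub_rpow (ht : t < 1) :
    deriv (fun x : ℝ => ((((1 - x) / 2) ^ p : ℝ) : ℂ)) t =
      -p * ((((1 - t) / 2) ^ p : ℝ) : ℂ) / (1 - t) :=
  (hasDerivAt_ofReal_half_one_sub_rpow p ht).deriv

theorem deriv_deriv_ofReal_half_one_sub_rpow (ht : t < 1) :
    deriv (deriv (fun x : ℝ => ((((1 - x) / 2) ^ p : ℝ) : ℂ))) t =
      p * (p - 1) * ((((1 - t) / 2) ^ p : ℝ) : ℂ) / (1 - t) ^ 2 := by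
  have hderiv : deriv (fun x : ℝ => ((((1 - x) / 2) ^ p : ℝ) : ℂ)) =ᶠ[𝓝 t]
      fun x => -p * ((((1 - x) / 2) ^ p : ℝ) : ℂ) / (1 - x) := by
    filter_upwards [Iio_mem_nhds ht] with x hx using deriv_ofReal_half_one_sub_rpow p hx
  have hne : (1 : ℂ) - t ≠ 0 := by exact_mod_cast (by linarith : (1 : ℝ) - t ≠ 0)
  have hden : HasDerivAt (fun x : ℝ => 1 - (x : ℂ)) (-1) t := by
    simpa using ((hasDerivAt_id t).ofReal_comp).const_sub 1
  have h := ((hasDerivAt_ofReal_half_one_sub_rpow p ht).const_mul (-p : ℂ)).fun_div hden hne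
  rw [hderiv.deriv_eq, h.deriv]
  field_simp

end HalfOneSubRpow

/-- `D_{(n,α,β)}(((1-τ)/2)^{-α} a(τ)) = ((1-τ)/2)^{-α} D_{(n+α,-α,β)} a(τ)`
for `|τ| < 1` and `C²` functions `a`. -/
theorem stmt9 (n α β : ℝ) (a : ℝ → ℂ)
    (hreg : ∀ τ ∈ Set.Ioo (-1 : ℝ) 1, ContDiffAt ℝ 2 a τ) :
    ∀ τ ∈ Set.Ioo (-1 : ℝ) 1,
      jacobiOp n α β (fun t => ((((1 - t) / 2 : ℝ) ^ (-α) : ℝ) : ℂ) * a t) τ =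
        ((((1 - τ) / 2 : ℝ) ^ (-α) : ℝ) : ℂ) * jacobiOp (n + α) (-α) β a τ := by
  intro τ hτ
  have ha := hreg τ hτ
  have hw := contDiffAt_ofReal_half_one_sub_rpow (-α) hτ.2
  have hne : (1 : ℂ) - τ ≠ 0 := by exact_mod_cast (by linarith [hτ.2] : (1 : ℝ) - τ ≠ 0)
  rw [jacobiOp, jacobiOp, deriv_deriv_mul hw ha,
    deriv_fun_mul (hw.differentiableAt (by norm_num)) (ha.differentiableAt (by norm_num)),
    deriv_deriv_ofReal_half_one_sub_rpow _ hτ.2, deriv_ofReal_half_one_sub_rpow _ hτ.2]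
  push_cast
  field_simp
  ring
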